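/- arXiv:2305.01875 — 4 statements merged into one kernel-verified Lean document; each statement's English description precedes it below -/
import Mathlib

section
/- Let p ≥ q ≥ 1 and p' ≥ q' ≥ 1 be integers and let f : D_{p,q} → D_{p',q'} be a proper holomorphic map. Suppose there exist a point P in the Shilov boundary S₀(D_{p,q}) and an open neighborhood U ⊆ M_{p×q}(ℂ) of P such that f extends C² to U, and suppose f maps S₀(D_{p,q}) ∩ U into S₀(D_{p',q'}). Then there is a dense subset W of S₀(D_{p,q}) ∩ U such that for every x ∈ W, the set of matrices v ∈ M_{p×q}(ℂ) for which the matrix rank of Df(x)(v) equals q' is dense in M_{p×q}(ℂ), where Df(x) is the (real) derivative at x of the C² extension of f, a complex-linear map M_{p×q}(ℂ) → M_{p'×q'}(ℂ). -/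
/-!
Fix a Shilov boundary point `x`. The disc `λ ↦ λ • x` lies in `D_{p,q}`, and for `c ≠ 0` the
function `λ ↦ ⟪F(x) c, f(λ • x) c⟫ / ‖c‖²` is a holomorphic self-map of the unit disc with boundary
value `1` at `λ = 1`. The Schwarz lemma, after a Möbius normalisation, gives the Hopf-type bound
`1 - Re Φ(r) ≥ κ (1 - r)`, so the radial derivative `Df(x)(x)` is injective on `ℂ^{q'}`. Then
`Df(x)(v + t • x) = t • (t⁻¹ • Df(x)(v) + Df(x)(x))` has full rank for all but finitely many `t`,
because its Gram determinant is a polynomial in `t⁻¹` that does not vanish at `0`. So `W` can be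
taken to be all of `S₀(D_{p,q}) ∩ U`.
-/

open Matrix
open scoped ComplexOrder

attribute [local instance] Matrix.normedAddCommGroup Matrix.normedSpace

open Set Filter Metric Topology ComplexConjugate

namespace Complex

theorem normSq_one_sub_conj_mul_sub_normSq_sub (a w : ℂ) :
    normSq (1 - conj a * w) - normSq (w - a) = (1 - normSq a) * (1 - normSq w) := by
  simp only [normSq_apply, sub_re, sub_im, mul_re, mul_im, conj_re, conj_im, one_re, one_im]
  ring

theorem norm_sub_lt_norm_one_sub_conj_mul {a w : ℂ} (ha : ‖a‖ < 1) (hw : ‖w‖ < 1) :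
    ‖w - a‖ < ‖1 - conj a * w‖ := by
  have key := normSq_one_sub_conj_mul_sub_normSq_sub a w
  simp only [normSq_eq_norm_sq] at key
  have ha2 : ‖a‖ ^ 2 < 1 := by nlinarith [norm_nonneg a]
  have hw2 : ‖w‖ ^ 2 < 1 := by nlinarith [norm_nonneg w]
  exact lt_of_pow_lt_pow_left₀ 2 (norm_nonneg _) (by nlinarith)

theorem one_sub_norm_mul_one_sub_le_of_norm_sub_le {a w : ℂ} {r : ℝ} (ha : ‖a‖ < 1)
    (hw : ‖w‖ < 1) (hr₀ : 0 ≤ r) (hr₁ : r ≤ 1) (h : ‖w - a‖ ≤ r * ‖1 - conj a * w‖) :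
    (1 - ‖a‖) * (1 - r) ≤ 2 * (1 - ‖w‖ ^ 2) := by
  have key := normSq_one_sub_conj_mul_sub_normSq_sub a w
  simp only [normSq_eq_norm_sq] at key
  have hden : 1 - ‖a‖ ≤ ‖1 - conj a * w‖ := by
    have : ‖conj a * w‖ ≤ ‖a‖ := by
      rw [norm_mul, RCLike.norm_conj]
      exact mul_le_of_le_one_right (norm_nonneg a) hw.le
    linarith [norm_sub_norm_le (1 : ℂ) (conj a * w), norm_one (α := ℂ)]
  have h2 : (1 - r ^ 2) * ‖1 - conj a * w‖ ^ 2 ≤ (1 - ‖a‖ ^ 2) * (1 - ‖w‖ ^ 2) := by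
    nlinarith [norm_nonneg (w - a), mul_nonneg hr₀ (norm_nonneg (1 - conj a * w))]
  have ha0 : 0 < 1 - ‖a‖ := by linarith
  have h3 : (1 - r ^ 2) * (1 - ‖a‖) ≤ (1 + ‖a‖) * (1 - ‖w‖ ^ 2) := by
    have : (1 - r ^ 2) * (1 - ‖a‖) ^ 2 ≤ (1 - r ^ 2) * ‖1 - conj a * w‖ ^ 2 :=
      mul_le_mul_of_nonneg_left (pow_le_pow_left₀ ha0.le hden 2) (by nlinarith)
    nlinarith
  have hw2 : 0 ≤ 1 - ‖w‖ ^ 2 := by nlinarith [norm_nonneg w]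
  nlinarith [mul_le_mul_of_nonneg_left (show 1 - r ≤ 1 - r ^ 2 by nlinarith) ha0.le,
    mul_le_mul_of_nonneg_right (show 1 + ‖a‖ ≤ 2 by linarith) hw2]

variable {Φ : ℂ → ℂ}

/-- The Schwarz–Pick lemma at the origin. -/
theorem norm_sub_le_mul_norm_one_sub_conj_mul_of_mapsTo_ball (hd : DifferentiableOn ℂ Φ (ball 0 1))
    (hmaps : MapsTo Φ (ball 0 1) (ball 0 1)) {z : ℂ} (hz : ‖z‖ < 1) :
    ‖Φ z - Φ 0‖ ≤ ‖z‖ * ‖1 - conj (Φ 0) * Φ z‖ := by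
  have hΦ : ∀ w ∈ ball (0 : ℂ) 1, ‖Φ w‖ < 1 := fun w hw => mem_ball_zero_iff.mp (hmaps hw)
  have ha := hΦ 0 (mem_ball_self one_pos)
  have hden : ∀ w ∈ ball (0 : ℂ) 1, 1 - conj (Φ 0) * Φ w ≠ 0 := fun w hw =>
    norm_pos_iff.mp ((norm_nonneg _).trans_lt (norm_sub_lt_norm_one_sub_conj_mul ha (hΦ w hw)))
  set k : ℂ → ℂ := fun w => (Φ w - Φ 0) / (1 - conj (Φ 0) * Φ w)
  have hk : ‖k z‖ ≤ ‖z‖ := by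
    refine norm_le_norm_of_mapsTo_ball ?_ (fun w hw => ?_) (by simp [k]) hz
    · exact (hd.sub_const _).div ((differentiableOn_const _).sub (hd.const_mul _)) hden
    · rw [mem_closedBall_zero_iff, norm_div, div_le_one (norm_pos_iff.mpr (hden w hw))]
      exact (norm_sub_lt_norm_one_sub_conj_mul ha (hΦ w hw)).le
  rwa [norm_div, div_le_iff₀ (norm_pos_iff.mpr (hden z (mem_ball_zero_iff.mpr hz)))] at hk

theorem one_sub_norm_mul_le_one_sub_re_of_mapsTo_ball (hd : DifferentiableOn ℂ Φ (ball 0 1))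
    (hmaps : MapsTo Φ (ball 0 1) (ball 0 1)) {r : ℝ} (hr₀ : 0 ≤ r) (hr₁ : r < 1) :
    (1 - ‖Φ 0‖) * (1 - r) ≤ 4 * (1 - (Φ r).re) := by
  have hr : ‖(r : ℂ)‖ < 1 := by rwa [norm_real, Real.norm_of_nonneg hr₀]
  have hΦr : ‖Φ r‖ < 1 := mem_ball_zero_iff.mp (hmaps (mem_ball_zero_iff.mpr hr))
  have hpick := norm_sub_le_mul_norm_one_sub_conj_mul_of_mapsTo_ball hd hmaps hr
  rw [norm_real, Real.norm_of_nonneg hr₀] at hpick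
  have hbound := one_sub_norm_mul_one_sub_le_of_norm_sub_le
    (mem_ball_zero_iff.mp (hmaps (mem_ball_self one_pos))) hΦr hr₀ hr₁.le hpick
  have hre : (Φ r).re ≤ ‖Φ r‖ := re_le_norm _
  nlinarith [sq_nonneg (1 - (Φ r).re), sq_nonneg (‖Φ r‖ - 1)]

theorem re_pos_of_hasDerivWithinAt_Iio (hd : DifferentiableOn ℂ Φ (ball 0 1))
    (hmaps : MapsTo Φ (ball 0 1) (ball 0 1)) {Ψ : ℝ → ℂ} {d : ℂ}
    (hΨ : HasDerivWithinAt Ψ d (Iio 1) 1) (hΨ₁ : Ψ 1 = 1)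
    (hΨΦ : ∀ r ∈ Ico (0 : ℝ) 1, Ψ r = Φ r) : 0 < d.re := by
  have hslope : Tendsto (fun r => (slope Ψ 1 r).re) (𝓝[<] 1) (𝓝 d.re) :=
    (continuous_re.tendsto d).comp
      ((hasDerivWithinAt_iff_tendsto_slope' (self_notMem_Iio (a := (1 : ℝ)))).mp hΨ)
  have hc : 0 < (1 - ‖Φ 0‖) / 4 := by
    have := mem_ball_zero_iff.mp (hmaps (mem_ball_self one_pos))
    linarith
  refine hc.trans_le (ge_of_tendsto hslope ?_)
  filter_upwards [Ico_mem_nhdsLT (zero_lt_one' ℝ)] with r hr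
  have hr₁ : 0 < 1 - r := sub_pos.mpr hr.2
  have hslope_re : (slope Ψ 1 r).re = (1 - (Φ r).re) / (1 - r) := by
    rw [slope_def_module, hΨ₁, hΨΦ r hr, smul_re, sub_re, one_re, smul_eq_mul, div_eq_inv_mul,
      ← neg_sub 1 r, inv_neg, ← neg_sub 1 (Φ r).re, neg_mul_neg]
  rw [hslope_re, div_le_div_iff₀ (by norm_num) hr₁]
  nlinarith [one_sub_norm_mul_le_one_sub_re_of_mapsTo_ball hd hmaps hr.1 hr.2]

end Complex

namespace Matrix

theorem posDef_one_sub_conjTranspose_smul_mul_smul {m n : Type*} [Fintype m] [DecidableEq n]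
    {x : Matrix m n ℂ} (hx : xᴴ * x = 1) {z : ℂ} (hz : ‖z‖ < 1) :
    (1 - (z • x)ᴴ * (z • x)).PosDef := by
  have h : 1 - (z • x)ᴴ * (z • x) = (1 - ‖z‖ ^ 2 : ℝ) • (1 : Matrix n n ℂ) := by
    rw [conjTranspose_smul, Matrix.smul_mul, Matrix.mul_smul, smul_smul, hx, Complex.star_def,
      Complex.conj_mul', sub_smul, one_smul, ← Complex.coe_smul]
    norm_cast
  rw [h]
  exact PosDef.one.smul (by nlinarith [norm_nonneg z])

variable {m n : Type*} [Fintype m] [Fintype n]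

theorem ofReal_norm_toLp_sq (v : n → ℂ) :
    ((‖WithLp.toLp 2 v‖ ^ 2 : ℝ) : ℂ) = star v ⬝ᵥ v := by
  rw [dotProduct_comm, ← EuclideanSpace.inner_toLp_toLp, inner_self_eq_norm_sq_to_K]
  norm_cast

theorem ofReal_norm_toLp_mulVec_sq (W : Matrix m n ℂ) (v : n → ℂ) :
    ((‖WithLp.toLp 2 (W *ᵥ v)‖ ^ 2 : ℝ) : ℂ) = star v ⬝ᵥ ((Wᴴ * W) *ᵥ v) := by
  rw [← mulVec_mulVec, dotProduct_mulVec, ← star_mulVec W v, ofReal_norm_toLp_sq]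

theorem norm_toLp_mulVec_lt_of_posDef [DecidableEq n] {W : Matrix m n ℂ} (hW : (1 - Wᴴ * W).PosDef)
    {v : n → ℂ} (hv : v ≠ 0) : ‖WithLp.toLp 2 (W *ᵥ v)‖ < ‖WithLp.toLp 2 v‖ := by
  have h := hW.dotProduct_mulVec_pos hv
  rw [sub_mulVec, dotProduct_sub, one_mulVec, ← ofReal_norm_toLp_sq,
    ← ofReal_norm_toLp_mulVec_sq, ← Complex.ofReal_sub, Complex.zero_lt_real, sub_pos] at h
  exact lt_of_pow_lt_pow_left₀ 2 (norm_nonneg _) h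

theorem norm_toLp_mulVec_of_conjTranspose_mul_self_eq_one [DecidableEq n] {W : Matrix m n ℂ}
    (hW : Wᴴ * W = 1) (v : n → ℂ) : ‖WithLp.toLp 2 (W *ᵥ v)‖ = ‖WithLp.toLp 2 v‖ := by
  have h := ofReal_norm_toLp_mulVec_sq W v
  rw [hW, one_mulVec, ← ofReal_norm_toLp_sq] at h
  exact (pow_left_inj₀ (norm_nonneg _) (norm_nonneg _) two_ne_zero).mp (Complex.ofReal_injective h)

theorem re_dotProduct_mulVec_pos_of_hasDerivWithinAt [DecidableEq n] {g : ℂ → Matrix m n ℂ}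
    (hg : DifferentiableOn ℂ g (ball 0 1)) (hgD : ∀ z ∈ ball (0 : ℂ) 1, (1 - (g z)ᴴ * g z).PosDef)
    {Γ : ℝ → Matrix m n ℂ} {B : Matrix m n ℂ} (hΓ : HasDerivWithinAt Γ B (Iio 1) 1)
    (hΓ₁ : (Γ 1)ᴴ * Γ 1 = 1) (hΓg : ∀ r ∈ Ico (0 : ℝ) 1, Γ r = g r) {c : n → ℂ} (hc : c ≠ 0) :
    0 < (star (Γ 1 *ᵥ c) ⬝ᵥ (B *ᵥ c)).re := by
  set N : ℝ := ‖WithLp.toLp 2 c‖ ^ 2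
  have hc' : WithLp.toLp 2 c ≠ 0 := by simpa using hc
  have hN : 0 < N := by positivity
  let φ : Matrix m n ℂ →L[ℂ] ℂ := LinearMap.toContinuousLinearMap
    (dotProductBilin ℂ ℂ (star (Γ 1 *ᵥ c)) ∘ₗ (mulVecBilin ℂ ℂ).flip c)
  have hφ : ∀ W, φ W = star (Γ 1 *ᵥ c) ⬝ᵥ (W *ᵥ c) := fun W => rfl
  have hφ_lt : ∀ z ∈ ball (0 : ℂ) 1, ‖φ (g z)‖ < N := fun z hz => by
    rw [hφ, dotProduct_comm, ← EuclideanSpace.inner_toLp_toLp]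
    calc _ ≤ ‖WithLp.toLp 2 (Γ 1 *ᵥ c)‖ * ‖WithLp.toLp 2 (g z *ᵥ c)‖ := norm_inner_le_norm _ _
      _ < ‖WithLp.toLp 2 c‖ * ‖WithLp.toLp 2 c‖ := by
        rw [norm_toLp_mulVec_of_conjTranspose_mul_self_eq_one hΓ₁]
        exact mul_lt_mul_of_pos_left (norm_toLp_mulVec_lt_of_posDef (hgD z hz) hc)
          (norm_pos_iff.mpr hc')
      _ = N := (sq _).symm
  have hφ_Γ₁ : φ (Γ 1) = N := by
    rw [hφ, ← ofReal_norm_toLp_sq, norm_toLp_mulVec_of_conjTranspose_mul_self_eq_one hΓ₁]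
  have hre := Complex.re_pos_of_hasDerivWithinAt_Iio (Φ := fun z => φ (g z) / N)
    (Ψ := fun r => φ (Γ r) / N) ((φ.differentiable.comp_differentiableOn hg).div_const _)
    (fun z hz => by
      rw [mem_ball_zero_iff, norm_div, Complex.norm_real, Real.norm_of_nonneg hN.le,
        div_lt_one hN]
      exact hφ_lt z hz)
    (((φ.restrictScalars ℝ).hasFDerivAt.comp_hasDerivWithinAt 1 hΓ).div_const _)
    (by simp only [hφ_Γ₁]; exact div_self (by exact_mod_cast hN.ne'))
    (fun r hr => by simp only [hΓg r hr])
  rwa [Complex.div_ofReal_re, div_pos_iff_of_pos_right hN] at hre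

theorem injective_mulVec_of_hasDerivWithinAt [DecidableEq n] {g : ℂ → Matrix m n ℂ}
    (hg : DifferentiableOn ℂ g (ball 0 1)) (hgD : ∀ z ∈ ball (0 : ℂ) 1, (1 - (g z)ᴴ * g z).PosDef)
    {Γ : ℝ → Matrix m n ℂ} {B : Matrix m n ℂ} (hΓ : HasDerivWithinAt Γ B (Iio 1) 1)
    (hΓ₁ : (Γ 1)ᴴ * Γ 1 = 1) (hΓg : ∀ r ∈ Ico (0 : ℝ) 1, Γ r = g r) :
    Function.Injective B.mulVec := by
  intro c₁ c₂ h
  by_contra hne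
  have hpos := re_dotProduct_mulVec_pos_of_hasDerivWithinAt hg hgD hΓ hΓ₁ hΓg (sub_ne_zero.mpr hne)
  rw [mulVec_sub B, h, sub_self, dotProduct_zero, Complex.zero_re] at hpos
  exact hpos.false

open Polynomial in
theorem finite_setOf_rank_ofReal_smul_add_ne [DecidableEq n] {A B : Matrix m n ℂ}
    (hB : Function.Injective B.mulVec) :
    {s : ℝ | ((s : ℂ) • A + B).rank ≠ Fintype.card n}.Finite := by
  set p : ℂ[X] := (((X : ℂ[X]) • Aᴴ.map C + Bᴴ.map C) * ((X : ℂ[X]) • A.map C + B.map C)).det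
  have hp_eval : ∀ z : ℂ, p.eval z = ((z • Aᴴ + Bᴴ) * (z • A + B)).det := fun z => by
    rw [← coe_evalRingHom, RingHom.map_det]
    congr 1
    ext i j
    simp [Matrix.mul_apply, eval_finsetSum, mul_comm z]
  have hp : p ≠ 0 := fun h => by
    have h0 := hp_eval 0
    rw [h, eval_zero, zero_smul, zero_add, zero_smul, zero_add] at h0
    exact ((isUnit_iff_isUnit_det _).mp (PosDef.conjTranspose_mul_self B hB).isUnit).ne_zero
      h0.symm
  refine ((p.finite_setOfPred_isRoot hp).preimage Complex.ofReal_injective.injOn).subset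
    fun s hs => ?_
  by_contra h
  apply hs
  rw [← rank_conjTranspose_mul_self]
  refine rank_of_det_ne_zero ?_
  rwa [conjTranspose_add, conjTranspose_smul, Complex.star_def, Complex.conj_ofReal, ← hp_eval]

theorem dense_setOf_rank_eq_card [DecidableEq n] {E : Type*} [AddCommGroup E] [Module ℝ E]
    [TopologicalSpace E] [ContinuousAdd E] [ContinuousSMul ℝ E] (L : E →ₗ[ℝ] Matrix m n ℂ) {x : E}
    (hx : Function.Injective (L x).mulVec) : Dense {v | (L v).rank = Fintype.card n} := by
  intro v
  have hlim : Tendsto (fun s : ℝ => v + s⁻¹ • x) atTop (𝓝 v) := by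
    simpa using tendsto_const_nhds.add ((tendsto_inv_atTop_zero (𝕜 := ℝ)).smul_const x)
  refine mem_closure_of_tendsto hlim ?_
  filter_upwards [atTop_le_cofinite
    (finite_setOf_rank_ofReal_smul_add_ne (A := L v) hx).compl_mem_cofinite,
    eventually_gt_atTop 0] with s hs hs₀
  have hs' : (s : ℂ) ≠ 0 := by exact_mod_cast hs₀.ne'
  have hL : L (v + s⁻¹ • x) = (s : ℂ)⁻¹ • ((s : ℂ) • L v + L x) := by
    rw [map_add, map_smul, smul_add, smul_smul, inv_mul_cancel₀ hs', one_smul,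
      ← Complex.ofReal_inv, Complex.coe_smul]
  rw [hL, rank_smul_of_mem_nonZeroDivisors _ (mem_nonZeroDivisors_of_ne_zero (inv_ne_zero hs'))]
  exact not_not.mp hs

end Matrix

theorem HasFDerivWithinAt.hasDerivWithinAt_Iio_smul {E F : Type*} [NormedAddCommGroup E]
    [NormedSpace ℝ E] [NormedAddCommGroup F] [NormedSpace ℝ F] {f : E → F} {f' : E →L[ℝ] F}
    {s : Set E} {x : E} (hf : HasFDerivWithinAt f f' s x) (hs : {r : ℝ | r • x ∈ s} ∈ 𝓝[<] 1) :
    HasDerivWithinAt (fun r : ℝ => f (r • x)) (f' x) (Iio 1) 1 := by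
  have hline : HasDerivWithinAt (fun r : ℝ => r • x) x {r : ℝ | r • x ∈ s} 1 := by
    simpa using ((hasDerivAt_id (1 : ℝ)).smul_const x).hasDerivWithinAt
  exact ((one_smul ℝ x ▸ hf).comp_hasDerivWithinAt 1 hline fun r hr => hr).mono_of_mem_nhdsWithin hs

theorem stmt2_general (p q p' q' : ℕ)
    (D : Set (Matrix (Fin p) (Fin q) ℂ))
    (hD : D = {Z : Matrix (Fin p) (Fin q) ℂ | (1 - Zᴴ * Z).PosDef})
    (D' : Set (Matrix (Fin p') (Fin q') ℂ))
    (hD' : D' = {Z : Matrix (Fin p') (Fin q') ℂ | (1 - Zᴴ * Z).PosDef})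
    (f : Matrix (Fin p) (Fin q) ℂ → Matrix (Fin p') (Fin q') ℂ)
    (hholo : DifferentiableOn ℂ f D) (hmaps : Set.MapsTo f D D')
    (U : Set (Matrix (Fin p) (Fin q) ℂ)) (hU : IsOpen U)
    (F : Matrix (Fin p) (Fin q) ℂ → Matrix (Fin p') (Fin q') ℂ)
    (hFf : Set.EqOn F f D) (hF : ContDiffOn ℝ 2 F (closure D ∩ U))
    (hShilov : ∀ Z ∈ U, Zᴴ * Z = 1 → (F Z)ᴴ * F Z = 1) :
    ∃ W : Set (Matrix (Fin p) (Fin q) ℂ),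
      W ⊆ {Z | Zᴴ * Z = 1} ∩ U ∧
      {Z : Matrix (Fin p) (Fin q) ℂ | Zᴴ * Z = 1} ∩ U ⊆ closure W ∧
      ∀ x ∈ W, Dense {v : Matrix (Fin p) (Fin q) ℂ |
        (fderivWithin ℝ F (closure D ∩ U) x v).rank = q'} := by
  refine ⟨{Z | Zᴴ * Z = 1} ∩ U, subset_rfl, subset_closure, ?_⟩
  rintro x ⟨hx, hxU⟩
  have hdisc : ∀ z ∈ ball (0 : ℂ) 1, z • x ∈ D := fun z hz =>
    hD.symm.subset <| posDef_one_sub_conjTranspose_smul_mul_smul hx (mem_ball_zero_iff.mp hz)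
  have hseg : ∀ r ∈ Ico (0 : ℝ) 1, r • x ∈ D := fun r hr => by
    simpa using hdisc r (by simpa [abs_of_nonneg hr.1] using hr.2)
  have hline : Tendsto (fun r : ℝ => r • x) (𝓝 1) (𝓝 x) :=
    (continuous_id.smul continuous_const : Continuous fun r : ℝ => r • x).tendsto' 1 x
      (one_smul ℝ x)
  have hxD : x ∈ closure D := mem_closure_of_tendsto (hline.mono_left nhdsWithin_le_nhds)
    (mem_of_superset (Ico_mem_nhdsLT zero_lt_one) hseg)
  have hnear : {r : ℝ | r • x ∈ closure D ∩ U} ∈ 𝓝[<] 1 :=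
    inter_mem (mem_of_superset (Ico_mem_nhdsLT zero_lt_one) fun r hr => subset_closure (hseg r hr))
      (nhdsWithin_le_nhds (hline (hU.mem_nhds hxU)))
  set L := fderivWithin ℝ F (closure D ∩ U) x
  have hΓ : HasDerivWithinAt (fun r : ℝ => F (r • x)) (L x) (Iio 1) 1 :=
    (hF.differentiableOn two_ne_zero x ⟨hxD, hxU⟩).hasFDerivWithinAt.hasDerivWithinAt_Iio_smul
      hnear
  have hinj : Function.Injective (L x).mulVec :=
    injective_mulVec_of_hasDerivWithinAt (g := fun z => f (z • x))
      (hholo.comp (differentiableOn_id.smul_const x) hdisc)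
      (fun z hz => hD'.subset (hmaps (hdisc z hz))) hΓ (by simpa using hShilov x hxU hx)
      (fun r hr => by simpa using hFf (hseg r hr))
  simpa using dense_setOf_rank_eq_card L.toLinearMap hinj

/-- Transversality, Proposition 5.1. For a proper holomorphic map
`f : D_{p,q} → D_{p',q'}` extending `C²` near a Shilov boundary point and sending the Shilov
boundary into the Shilov boundary, at a dense set of Shilov boundary points `x` in `U` the
derivative `Df(x)(v)` has rank `q'` for a dense set of directions `v`. -/
theorem stmt2 (p q p' q' : ℕ) (hq : 1 ≤ q) (hpq : q ≤ p) (hq' : 1 ≤ q') (hp'q' : q' ≤ p')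
    (D : Set (Matrix (Fin p) (Fin q) ℂ))
    (hD : D = {Z : Matrix (Fin p) (Fin q) ℂ | (1 - Zᴴ * Z).PosDef})
    (D' : Set (Matrix (Fin p') (Fin q') ℂ))
    (hD' : D' = {Z : Matrix (Fin p') (Fin q') ℂ | (1 - Zᴴ * Z).PosDef})
    (f : Matrix (Fin p) (Fin q) ℂ → Matrix (Fin p') (Fin q') ℂ)
    (hholo : DifferentiableOn ℂ f D) (hmaps : Set.MapsTo f D D')
    (hproper : ∀ K : Set (Matrix (Fin p') (Fin q') ℂ), K ⊆ D' → IsCompact K →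
      IsCompact {Z ∈ D | f Z ∈ K})
    (P : Matrix (Fin p) (Fin q) ℂ) (hP : Pᴴ * P = 1)
    (U : Set (Matrix (Fin p) (Fin q) ℂ)) (hU : IsOpen U) (hPU : P ∈ U)
    (F : Matrix (Fin p) (Fin q) ℂ → Matrix (Fin p') (Fin q') ℂ)
    (hFf : Set.EqOn F f D) (hF : ContDiffOn ℝ 2 F (closure D ∩ U))
    (hShilov : ∀ Z ∈ U, Zᴴ * Z = 1 → (F Z)ᴴ * F Z = 1) :
    ∃ W : Set (Matrix (Fin p) (Fin q) ℂ),
      W ⊆ {Z | Zᴴ * Z = 1} ∩ U ∧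
      {Z : Matrix (Fin p) (Fin q) ℂ | Zᴴ * Z = 1} ∩ U ⊆ closure W ∧
      ∀ x ∈ W, Dense {v : Matrix (Fin p) (Fin q) ℂ |
        (fderivWithin ℝ F (closure D ∩ U) x v).rank = q'} :=
  stmt2_general p q p' q' D hD D' hD' f hholo hmaps U hU F hFf hF hShilov
end

section
/- Let ℍ = {ζ ∈ ℂ : Re ζ < 0}, let U ⊆ ℝ be a nonempty open set, and let h : ℍ → ℂⁿ be holomorphic with ‖h(ζ)‖ ≤ 1 for all ζ ∈ ℍ. Suppose h extends to a map that is twice continuously differentiable in the real sense on closure(ℍ) ∩ W, where W ⊆ ℂ is open with {it : t ∈ U} ⊆ W, and suppose that for every t ∈ U one has ‖h(it)‖ = 1 and Σ_{j=1}^n h_j'(it) · conj(h_j(it)) = 0, where h_j' is the complex derivative of the j-th component. Then h is constant. -/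
/-!
Pick `t₀ ∈ U` and put `c = h(it₀)`, a unit vector. The scalar function `φ = ⟪c, h⟫` is holomorphic
on `ℍ` with `|φ| ≤ 1` and `φ(it₀) = 1`, and the tangency condition says that its derivative
`⟪c, h'⟫` vanishes at `it₀`; hence `1 - φ(-s + it₀) = o(s)` as `s → 0⁺`.
On the other hand `g = 1 - φ` has nonnegative real part, and the Schwarz lemma for maps into the
right half-plane gives the Julia-type estimate `s |g(-1 + it₀)| ≤ |g(-s + it₀)|`. So `φ` attains
the value `1` at the interior point `-1 + it₀`, the maximum modulus principle makes `φ ≡ 1`,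
and equality in Cauchy–Schwarz forces `h ≡ c`.
-/

open Complex ComplexConjugate Metric Set Filter Topology Asymptotics

lemma norm_sub_div_add_conj_lt_one {w a : ℂ} (hw : 0 < w.re) (ha : 0 < a.re) :
    ‖(w - a) / (w + conj a)‖ < 1 := by
  have hden : 0 < ‖w + conj a‖ := norm_pos_iff.mpr fun h0 => by
    have := congrArg re h0
    simp only [add_re, conj_re, zero_re] at this
    linarith
  rw [norm_div, div_lt_one hden]
  refine lt_of_pow_lt_pow_left₀ 2 (norm_nonneg _) ?_
  rw [Complex.sq_norm, Complex.sq_norm, normSq_apply, normSq_apply]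
  simp only [sub_re, sub_im, add_re, add_im, conj_re, conj_im]
  nlinarith

/-- The Schwarz lemma for maps of the unit disc into the right half-plane, whose
pseudo-hyperbolic distance is `|w - a| / |w + ā|`. -/
lemma norm_sub_div_add_conj_le_norm {g : ℂ → ℂ} (hg : DifferentiableOn ℂ g (ball 0 1))
    (hre : ∀ z ∈ ball (0 : ℂ) 1, 0 < (g z).re) {z : ℂ} (hz : ‖z‖ < 1) :
    ‖(g z - g 0) / (g z + conj (g 0))‖ ≤ ‖z‖ := by
  have hre₀ := hre 0 (mem_ball_self one_pos)
  have hden : ∀ w ∈ ball (0 : ℂ) 1, g w + conj (g 0) ≠ 0 := fun w hw h0 => by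
    have := congrArg re h0
    simp only [add_re, conj_re, zero_re] at this
    linarith [hre w hw]
  refine norm_le_norm_of_mapsTo_ball ((hg.sub_const _).div (hg.add_const _) hden)
    (fun w hw => ?_) (by simp) hz
  exact mem_closedBall_zero_iff.mpr (norm_sub_div_add_conj_lt_one (hre w hw) hre₀).le

lemma mul_norm_le_norm_of_norm_sub_div_add_conj_le {a b : ℂ} {s : ℝ} (hs₀ : 0 ≤ s)
    (hs₁ : s ≤ 1) (hab : b + conj a ≠ 0)
    (h : ‖(b - a) / (b + conj a)‖ ≤ (1 - s) / (1 + s)) : s * ‖a‖ ≤ ‖b‖ := by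
  rw [norm_div, div_le_div_iff₀ (norm_pos_iff.mpr hab) (by linarith)] at h
  have h₁ : ‖a‖ - ‖b‖ ≤ ‖b - a‖ := by
    simpa only [norm_sub_rev a b] using norm_sub_norm_le a b
  have h₂ : ‖b + conj a‖ ≤ ‖b‖ + ‖a‖ := (norm_add_le _ _).trans_eq (by rw [RCLike.norm_conj])
  nlinarith [norm_nonneg (b - a), norm_nonneg a, norm_nonneg b]

lemma re_add_one_div_sub_one_neg {z : ℂ} (hz : ‖z‖ < 1) : ((z + 1) / (z - 1)).re < 0 := by
  have hz1 : z - 1 ≠ 0 := fun h0 => by simp [sub_eq_zero.mp h0] at hz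
  have hnum : (z + 1).re * (z - 1).re + (z + 1).im * (z - 1).im = normSq z - 1 := by
    simp only [add_re, add_im, sub_re, sub_im, one_re, one_im, normSq_apply]
    ring
  have hz2 : normSq z < 1 := by
    rw [← Complex.sq_norm]
    nlinarith [norm_nonneg z]
  rw [div_re, ← add_div, hnum]
  exact div_neg_of_neg_of_pos (by linarith) (normSq_pos.mpr hz1)

theorem mul_norm_le_norm_of_re_nonneg {g : ℂ → ℂ} (hg : DifferentiableOn ℂ g {ζ | ζ.re < 0})
    (hre : ∀ ζ : ℂ, ζ.re < 0 → 0 ≤ (g ζ).re) (t : ℝ) {s : ℝ} (hs₀ : 0 < s) (hs₁ : s < 1) :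
    s * ‖g (-1 + t * I)‖ ≤ ‖g (-s + t * I)‖ := by
  -- `η` is a Cayley map of the unit disc onto the left half-plane, with `η 0 = -1 + it`.
  set η : ℂ → ℂ := fun z => t * I + (z + 1) / (z - 1)
  have hη : ∀ z ∈ ball (0 : ℂ) 1, (η z).re < 0 := fun z hz => by
    simpa [η] using re_add_one_div_sub_one_neg (mem_ball_zero_iff.mp hz)
  have hηd : DifferentiableOn ℂ η (ball 0 1) := by
    refine ((differentiableOn_id.add_const 1).div (differentiableOn_id.sub_const 1)
      fun z hz h0 => ?_).const_add _
    simp [sub_eq_zero.mp h0] at hz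
  set zₛ : ℂ := (s - 1) / (s + 1)
  have hsc : (s : ℂ) + 1 ≠ 0 := by exact_mod_cast (by linarith : s + 1 ≠ 0)
  have hzₛ : ‖zₛ‖ = (1 - s) / (1 + s) := by
    rw [show zₛ = ((s - 1) / (s + 1) : ℝ) by push_cast; rfl, norm_real, Real.norm_eq_abs,
      abs_div, abs_of_nonpos (by linarith), abs_of_pos (by linarith)]
    ring
  have hηzₛ : η zₛ = -s + t * I := by
    simp only [η, zₛ]
    field_simp
    ring
  have hη0 : η 0 = -1 + t * I := by simp [η]; ring
  -- `g + ε` takes values in the open half-plane, where the Schwarz lemma applies.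
  have hε : ∀ ε : ℝ, 0 < ε → s * ‖g (-1 + t * I) + ε‖ ≤ ‖g (-s + t * I) + ε‖ := by
    intro ε hε
    have hre' : ∀ z ∈ ball (0 : ℂ) 1, 0 < (g (η z) + ε).re := fun z hz => by
      simpa using add_pos_of_nonneg_of_pos (hre _ (hη z hz)) hε
    have hschwarz := norm_sub_div_add_conj_le_norm ((hg.comp hηd hη).add_const (ε : ℂ)) hre'
      (z := zₛ) (by rw [hzₛ, div_lt_one (by linarith)]; linarith)
    simp only [Function.comp_apply, hηzₛ, hη0, hzₛ] at hschwarz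
    refine mul_norm_le_norm_of_norm_sub_div_add_conj_le hs₀.le hs₁.le (fun h0 => ?_) hschwarz
    have := congrArg re h0
    simp only [add_re, conj_re, ofReal_re, zero_re] at this
    linarith [hre (-1 + t * I) (by simp), hre (-s + t * I) (by simpa using hs₀)]
  have hlim : ∀ w : ℂ, Tendsto (fun ε : ℝ => ‖w + ε‖) (𝓝[>] 0) (𝓝 ‖w‖) := fun w => by
    simpa using ((continuous_const.add continuous_ofReal).norm.tendsto 0).mono_left
      (nhdsWithin_le_nhds (a := (0 : ℝ)) (s := Ioi 0))
  exact le_of_tendsto_of_tendsto ((hlim _).const_mul s) (hlim _)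
    (eventually_nhdsWithin_of_forall hε)

theorem eq_zero_of_isLittleO_of_re_nonneg {g : ℂ → ℂ}
    (hg : DifferentiableOn ℂ g {ζ | ζ.re < 0}) (hre : ∀ ζ : ℂ, ζ.re < 0 → 0 ≤ (g ζ).re)
    (t : ℝ) (ho : (fun s : ℝ => g (-s + t * I)) =o[𝓝[>] 0] fun s => s) :
    g (-1 + t * I) = 0 := by
  refine norm_le_zero_iff.mp (le_of_forall_gt fun δ hδ => ?_)
  obtain ⟨s, hsδ, hs₀, hs₁⟩ :=
    ((ho.def (half_pos hδ)).and (Ioo_mem_nhdsGT one_pos)).exists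
  have hjulia := mul_norm_le_norm_of_re_nonneg hg hre t hs₀ hs₁
  rw [Real.norm_eq_abs, abs_of_pos hs₀] at hsδ
  nlinarith

theorem eqOn_one_of_isLittleO {φ : ℂ → ℂ} (hφ : DifferentiableOn ℂ φ {ζ | ζ.re < 0})
    (hφ₁ : ∀ ζ : ℂ, ζ.re < 0 → ‖φ ζ‖ ≤ 1) (t : ℝ)
    (ho : (fun s : ℝ => 1 - φ (-s + t * I)) =o[𝓝[>] 0] fun s => s) :
    EqOn φ 1 {ζ | ζ.re < 0} := by
  have hre : ∀ ζ : ℂ, ζ.re < 0 → 0 ≤ (1 - φ ζ).re := fun ζ hζ => by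
    simpa using (re_le_norm (φ ζ)).trans (hφ₁ ζ hζ)
  have hz₀ : (-1 + t * I).re < 0 := by simp
  have hφz₀ : φ (-1 + t * I) = 1 :=
    (sub_eq_zero.mp (eq_zero_of_isLittleO_of_re_nonneg (hφ.const_sub 1) hre t ho)).symm
  have hmax : IsMaxOn (norm ∘ φ) {ζ | ζ.re < 0} (-1 + t * I) := fun ζ hζ => by
    simpa [hφz₀] using hφ₁ ζ hζ
  simpa [hφz₀] using eqOn_of_isPreconnected_of_isMaxOn_norm
    (convex_halfSpace_re_lt 0).isPreconnected (isOpen_lt continuous_re continuous_const) hφ hz₀ hmax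

theorem hasDerivWithinAt_Ici_of_continuousWithinAt_deriv {E : Type*} [NormedAddCommGroup E]
    [NormedSpace ℂ E] {h H h' : ℂ → E} {t : ℝ} (hHh : ∀ ζ : ℂ, ζ.re < 0 → H ζ = h ζ)
    (hH : ContinuousWithinAt H {ζ | ζ.re < 0} (t * I))
    (hh' : ∀ ζ : ℂ, ζ.re < 0 → HasDerivAt h (h' ζ) ζ)
    (hh'c : ContinuousWithinAt h' {ζ | ζ.re < 0} (t * I)) :
    HasDerivWithinAt (fun σ : ℝ => H (-σ + t * I)) (-h' (t * I)) (Ici 0) 0 := by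
  set p : ℝ → ℂ := fun σ => -σ + t * I
  have hp : ∀ σ > 0, (p σ).re < 0 := fun σ hσ => by simpa [p] using hσ
  have hp_tendsto : Tendsto p (𝓝[>] 0) (𝓝[{ζ | ζ.re < 0}] (t * I)) := by
    refine tendsto_nhdsWithin_iff.mpr ⟨?_, eventually_nhdsWithin_of_forall hp⟩
    have : Continuous p := continuous_ofReal.neg.add continuous_const
    simpa [p] using (this.tendsto 0).mono_left nhdsWithin_le_nhds
  have hderiv : ∀ σ > 0, HasDerivAt (fun σ : ℝ => H (p σ)) (-h' (p σ)) σ := by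
    intro σ hσ
    have hpd : HasDerivAt p (-1) σ :=
      ((hasDerivAt_id σ).ofReal_comp.neg.add_const (t * I)).congr_deriv (by simp)
    have hd := (hh' (p σ) (hp σ hσ)).scomp σ hpd
    rw [neg_one_smul] at hd
    refine hd.congr_of_eventuallyEq ?_
    filter_upwards [Ioi_mem_nhds hσ] with σ' hσ' using hHh _ (hp σ' hσ')
  refine hasDerivWithinAt_Ici_of_tendsto_deriv
    (fun σ hσ => (hderiv σ hσ).differentiableAt.differentiableWithinAt) ?_
    self_mem_nhdsWithin ?_
  · exact hH.tendsto.comp hp_tendsto |>.mono_right (by simp)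
  · refine (hh'c.tendsto.comp hp_tendsto).neg.congr' ?_
    filter_upwards [self_mem_nhdsWithin] with σ hσ using ((hderiv σ hσ).deriv).symm

lemma eq_of_inner_eq_one {𝕜 E : Type*} [RCLike 𝕜] [NormedAddCommGroup E] [InnerProductSpace 𝕜 E]
    {x y : E} (hx : ‖x‖ ≤ 1) (hy : ‖y‖ ≤ 1) (h : inner 𝕜 x y = 1) : x = y := by
  have hxy : 1 ≤ ‖x‖ * ‖y‖ := by simpa [h] using norm_inner_le_norm (𝕜 := 𝕜) x y
  have hx₁ : ‖x‖ = 1 := by nlinarith [norm_nonneg x, norm_nonneg y]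
  have hy₁ : ‖y‖ = 1 := by nlinarith [norm_nonneg x, norm_nonneg y]
  exact (inner_eq_one_iff_of_norm_eq_one hx₁ hy₁).mp h

theorem stmt4_general (n : ℕ)
    (h : ℂ → EuclideanSpace ℂ (Fin n))
    (hholo : DifferentiableOn ℂ h {ζ : ℂ | ζ.re < 0})
    (hbdd : ∀ ζ : ℂ, ζ.re < 0 → ‖h ζ‖ ≤ 1)
    (U : Set ℝ) (hUne : U.Nonempty)
    (W : Set ℂ) (hWo : IsOpen W) (hUW : ∀ t ∈ U, (t : ℂ) * Complex.I ∈ W)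
    -- the `C²` extension `H` of `h` on `closure(ℍ) ∩ W`
    (H : ℂ → EuclideanSpace ℂ (Fin n))
    (hHh : ∀ ζ : ℂ, ζ.re < 0 → H ζ = h ζ)
    (hH : ContDiffOn ℝ 2 H (closure {ζ : ℂ | ζ.re < 0} ∩ W))
    -- `h'` is the complex derivative of `h`, extended continuously to the boundary
    (h' : ℂ → EuclideanSpace ℂ (Fin n))
    (hh' : ∀ ζ : ℂ, ζ.re < 0 → HasDerivAt h (h' ζ) ζ)
    (hh'cont : ContinuousOn h' (closure {ζ : ℂ | ζ.re < 0} ∩ W))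
    (hnorm : ∀ t ∈ U, ‖H ((t : ℂ) * Complex.I)‖ = 1)
    (htang : ∀ t ∈ U, ∑ j : Fin n,
      h' ((t : ℂ) * Complex.I) j * (starRingEnd ℂ) (H ((t : ℂ) * Complex.I) j) = 0) :
    ∀ ζ ξ : ℂ, ζ.re < 0 → ξ.re < 0 → h ζ = h ξ := by
  obtain ⟨t₀, ht₀⟩ := hUne
  set c := H (t₀ * I)
  have hc : ‖c‖ = 1 := hnorm t₀ ht₀
  have hcont {F : ℂ → EuclideanSpace ℂ (Fin n)}
      (hF : ContinuousOn F (closure {ζ : ℂ | ζ.re < 0} ∩ W)) :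
      ContinuousWithinAt F {ζ : ℂ | ζ.re < 0} (t₀ * I) :=
    ((continuousWithinAt_inter (hWo.mem_nhds (hUW t₀ ht₀))).mp
      (hF _ ⟨by simp, hUW t₀ ht₀⟩)).mono subset_closure
  have hderiv := ((innerSL ℂ c).hasFDerivAt.restrictScalars ℝ).comp_hasDerivWithinAt (0 : ℝ)
    (hasDerivWithinAt_Ici_of_continuousWithinAt_deriv hHh (hcont hH.continuousOn) hh'
      (hcont hh'cont))
  have htang₀ : inner ℂ c (h' (t₀ * I)) = 0 := by
    rw [← htang t₀ ht₀]
    simp [PiLp.inner_apply, c, mul_comm]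
  have ho : (fun s : ℝ => 1 - inner ℂ c (h (-s + t₀ * I))) =o[𝓝[>] 0] fun s => s := by
    have := (hasDerivWithinAt_iff_isLittleO.mp hderiv).mono (nhdsWithin_mono _ Ioi_subset_Ici_self)
    simp only [coe_innerSL_apply, Function.comp_apply, ofReal_zero, neg_zero, zero_add,
      inner_self_eq_norm_sq_to_K, hc, coe_algebraMap, ofReal_one, one_pow, sub_zero,
      ContinuousLinearMap.coe_restrictScalars', inner_neg_right, htang₀, smul_zero, c] at this
    refine this.neg_left.congr' ?_ EventuallyEq.rfl
    filter_upwards [self_mem_nhdsWithin] with s hs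
    simp [c, hHh _ (by simpa using hs : (-(s : ℂ) + t₀ * I).re < 0)]
  have hφ := eqOn_one_of_isLittleO ((innerSL ℂ c).differentiable.comp_differentiableOn hholo)
    (fun ζ hζ => (norm_inner_le_norm c (h ζ)).trans (by simpa [hc] using hbdd ζ hζ)) t₀ ho
  have hconst : ∀ ζ : ℂ, ζ.re < 0 → c = h ζ := fun ζ hζ =>
    eq_of_inner_eq_one hc.le (hbdd ζ hζ) (hφ hζ)
  intro ζ ξ hζ hξ
  rw [← hconst ζ hζ, ← hconst ξ hξ]

/-- A bounded holomorphic map `h : ℍ → ℂⁿ` on the left half-plane, `C²` up to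
a boundary piece `{it : t ∈ U}`, whose boundary values lie on the unit sphere and whose complex
derivative is complex-tangential there (`∑ⱼ hⱼ'(it)·conj(hⱼ(it)) = 0` for all `t ∈ U`),
must be constant. -/
theorem stmt4 (n : ℕ)
    (h : ℂ → EuclideanSpace ℂ (Fin n))
    (hholo : DifferentiableOn ℂ h {ζ : ℂ | ζ.re < 0})
    (hbdd : ∀ ζ : ℂ, ζ.re < 0 → ‖h ζ‖ ≤ 1)
    (U : Set ℝ) (hUo : IsOpen U) (hUne : U.Nonempty)
    (W : Set ℂ) (hWo : IsOpen W) (hUW : ∀ t ∈ U, (t : ℂ) * Complex.I ∈ W)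
    -- the `C²` extension `H` of `h` on `closure(ℍ) ∩ W`
    (H : ℂ → EuclideanSpace ℂ (Fin n))
    (hHh : ∀ ζ : ℂ, ζ.re < 0 → H ζ = h ζ)
    (hH : ContDiffOn ℝ 2 H (closure {ζ : ℂ | ζ.re < 0} ∩ W))
    -- `h'` is the complex derivative of `h`, extended continuously to the boundary
    (h' : ℂ → EuclideanSpace ℂ (Fin n))
    (hh' : ∀ ζ : ℂ, ζ.re < 0 → HasDerivAt h (h' ζ) ζ)
    (hh'cont : ContinuousOn h' (closure {ζ : ℂ | ζ.re < 0} ∩ W))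
    (hnorm : ∀ t ∈ U, ‖H ((t : ℂ) * Complex.I)‖ = 1)
    (htang : ∀ t ∈ U, ∑ j : Fin n,
      h' ((t : ℂ) * Complex.I) j * (starRingEnd ℂ) (H ((t : ℂ) * Complex.I) j) = 0) :
    ∀ ζ ξ : ℂ, ζ.re < 0 → ξ.re < 0 → h ζ = h ξ :=
  stmt4_general n h hholo hbdd U hUne W hWo hUW H hHh hH h' hh' hh'cont hnorm htang
end

section
/- Let p' ≥ q' ≥ 1 be integers and let Δ ⊆ ℂ be the open unit disc. Let F : Δ → M_{p'×q'}(ℂ) be holomorphic and suppose F extends to a continuously differentiable (C¹ in the real sense) map on closure(Δ) ∩ W for some open set W ⊆ ℂ containing 1. Assume F(ζ)* F(ζ) = I_{q'} for every ζ ∈ ∂Δ ∩ W, and F(1) = the p'×q' matrix whose top q'×q' block is I_{q'} and whose remaining entries are 0. Write F = (f₁; f₂) where f₁ is the top q'×q' block. Then the matrix f₁'(1) is Hermitian, i.e. f₁'(1) = (f₁'(1))*, where f₁' denotes the complex derivative (extended continuously to the boundary point 1). -/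
/-!
Differentiating the isometry condition `F(e^{iθ})ᴴ F(e^{iθ}) = I` at `θ = 0`, where the boundary
curve has velocity `i`, gives `-i F'(1)ᴴ F(1) + i F(1)ᴴ F'(1) = 0`, i.e. `F(1)ᴴ F'(1)` is Hermitian;
for `F(1) = (I; 0)` this matrix is the top block `f₁'(1)`. The chain rule at the boundary point is
available because a complex derivative that extends continuously to the boundary of a convex open
set is the real Fréchet derivative within its closure.
-/

open Matrix Filter Metric Set
open scoped Topology

attribute [local instance] Matrix.normedAddCommGroup Matrix.normedSpace

theorem hasFDerivWithinAt_closure_of_hasDerivAt {E : Type*} [NormedAddCommGroup E]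
    [NormedSpace ℂ E] {f f' : ℂ → E} {s : Set ℂ} {x : ℂ} (hconv : Convex ℝ s) (hs : IsOpen s)
    (hf : ∀ z ∈ s, HasDerivAt f (f' z) z) (hfc : ContinuousOn f (closure s))
    (hf'x : ContinuousWithinAt f' s x) :
    HasFDerivWithinAt f (((1 : ℂ →L[ℂ] ℂ).smulRight (f' x)).restrictScalars ℝ) (closure s) x := by
  have hfderiv : ∀ z ∈ s,
      fderiv ℝ f z = ((1 : ℂ →L[ℂ] ℂ).smulRight (f' z)).restrictScalars ℝ :=
    fun z hz => ((hf z hz).hasFDerivAt.restrictScalars ℝ).fderiv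
  have hcont : Continuous fun a : E => ((1 : ℂ →L[ℂ] ℂ).smulRight a).restrictScalars ℝ :=
    (ContinuousLinearMap.restrictScalarsIsometry ℂ ℂ E ℝ ℝ).continuous.comp
      (ContinuousLinearMap.smulRightL ℂ ℂ E 1).continuous
  refine hasFDerivWithinAt_closure_of_tendsto_fderiv
    (fun z hz => ((hf z hz).differentiableAt.restrictScalars ℝ).differentiableWithinAt)
    hconv hs (fun y hy => (hfc y hy).mono subset_closure) ?_
  exact ((hcont.tendsto _).comp hf'x).congr'
    (eventually_nhdsWithin_of_forall fun z hz => (hfderiv z hz).symm)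

theorem circleMap_zero_one_zero : circleMap 0 1 0 = 1 := by
  simp [circleMap]

theorem hasDerivAt_comp_circleMap_zero_one {E : Type*} [NormedAddCommGroup E] [NormedSpace ℂ E]
    {F F' : ℂ → E} {W : Set ℂ} (hWo : IsOpen W) (h1W : (1 : ℂ) ∈ W)
    (hF : ContinuousOn F (closure (ball 0 1) ∩ W))
    (hF' : ∀ z ∈ ball (0 : ℂ) 1, HasDerivAt F (F' z) z)
    (hF'c : ContinuousOn F' (closure (ball 0 1) ∩ W)) :
    HasDerivAt (fun θ => F (circleMap 0 1 θ)) (Complex.I • F' 1) 0 := by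
  obtain ⟨r, hr, hrW⟩ := nhds_basis_closedBall.mem_iff.1 (hWo.mem_nhds h1W)
  -- a convex open piece of the disc whose closure stays inside `W`
  set s := ball (0 : ℂ) 1 ∩ ball 1 r
  have hsW : closure s ⊆ closure (ball 0 1) ∩ W := fun z hz =>
    ⟨closure_mono inter_subset_left hz,
      hrW <| closure_minimal (inter_subset_right.trans ball_subset_closedBall)
        isClosed_closedBall hz⟩
  have h1 : (1 : ℂ) ∈ closure (ball 0 1) ∩ W := ⟨by simp [closure_ball], h1W⟩
  have hFs := hasFDerivWithinAt_closure_of_hasDerivAt ((convex_ball _ _).inter (convex_ball _ _))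
    (isOpen_ball.inter isOpen_ball) (fun z hz => hF' z hz.1) (hF.mono hsW)
    ((hF'c 1 h1).mono (subset_closure.trans hsW))
  have hnear : ∀ᶠ θ in 𝓝 0, circleMap 0 1 θ ∈ ball 1 r :=
    (continuous_circleMap 0 1).continuousAt.eventually_mem
      (by rw [circleMap_zero_one_zero]; exact ball_mem_nhds 1 hr)
  have hcircle : ∀ᶠ θ in 𝓝 0, circleMap 0 1 θ ∈ closure s :=
    hnear.mono fun θ hθ => isOpen_ball.closure_inter ⟨by simp [closure_ball], hθ⟩
  simpa [circleMap_zero_one_zero, Function.comp_def] using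
    hFs.comp_hasDerivAt_of_eq 0 (hasDerivAt_circleMap 0 1 0) hcircle circleMap_zero_one_zero.symm

section Matrix

variable {m n : Type*} [Fintype m] [Fintype n]

theorem HasDerivAt.conjTranspose_mul_self {G : ℝ → Matrix m n ℂ} {G' : Matrix m n ℂ} {t : ℝ}
    (h : HasDerivAt G G' t) :
    HasDerivAt (fun τ => (G τ)ᴴ * G τ) (G'ᴴ * G t + (G t)ᴴ * G') t := by
  have hentry (k : m) (j : n) : HasDerivAt (fun τ => G τ k j) (G' k j) t :=
    hasDerivAt_pi.1 (hasDerivAt_pi.1 h k) j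
  refine hasDerivAt_pi.2 fun i => hasDerivAt_pi.2 fun j => ?_
  simp only [mul_apply, conjTranspose_apply, Matrix.add_apply, ← Finset.sum_add_distrib]
  exact HasDerivAt.fun_sum fun k _ => (hentry k i).star.fun_mul (hentry k j)

theorem HasDerivAt.isHermitian_conjTranspose_mul_of_I_smul [DecidableEq n]
    {G : ℝ → Matrix m n ℂ} {A : Matrix m n ℂ} {t : ℝ} (h : HasDerivAt G (Complex.I • A) t)
    (hG : ∀ᶠ τ in 𝓝 t, (G τ)ᴴ * G τ = 1) :
    ((G t)ᴴ * A).IsHermitian := by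
  have hzero := h.conjTranspose_mul_self.unique ((hasDerivAt_const t 1).congr_of_eventuallyEq hG)
  rw [conjTranspose_smul, Matrix.smul_mul, Matrix.mul_smul, Complex.star_def, Complex.conj_I,
    neg_smul, neg_add_eq_sub, ← smul_sub, smul_eq_zero] at hzero
  rw [IsHermitian, conjTranspose_mul, conjTranspose_conjTranspose]
  exact (sub_eq_zero.1 (hzero.resolve_left Complex.I_ne_zero)).symm

end Matrix

theorem conjTranspose_mul_apply_of_eq_ite {p q : ℕ} (h : q ≤ p) {E : Matrix (Fin p) (Fin q) ℂ}
    (hE : ∀ k j, E k j = if (k : ℕ) = (j : ℕ) then 1 else 0)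
    (A : Matrix (Fin p) (Fin q) ℂ) (i j : Fin q) :
    (Eᴴ * A) i j = A (Fin.castLE h i) j := by
  have hE' (k : Fin p) (j : Fin q) : E k j = if k = Fin.castLE h j then 1 else 0 := by
    simp [hE, Fin.ext_iff]
  simp [mul_apply, hE']

theorem stmt6_general (p' q' : ℕ) (hp'q' : q' ≤ p')
    (F : ℂ → Matrix (Fin p') (Fin q') ℂ)
    (W : Set ℂ) (hWo : IsOpen W) (h1W : (1 : ℂ) ∈ W)
    (hreg : ContDiffOn ℝ 1 F (closure (Metric.ball (0 : ℂ) 1) ∩ W))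
    (hunit : ∀ ζ ∈ Metric.sphere (0 : ℂ) 1 ∩ W, (F ζ)ᴴ * F ζ = 1)
    (hF1 : ∀ (k : Fin p') (j : Fin q'), F 1 k j = if (k : ℕ) = (j : ℕ) then 1 else 0)
    -- `F'` is the complex derivative of `F`, extended continuously to the boundary
    (F' : ℂ → Matrix (Fin p') (Fin q') ℂ)
    (hF' : ∀ z ∈ Metric.ball (0 : ℂ) 1, HasDerivAt F (F' z) z)
    (hF'cont : ContinuousOn F' (closure (Metric.ball (0 : ℂ) 1) ∩ W)) :
    ∀ i j : Fin q', F' 1 (Fin.castLE hp'q' i) j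
      = (starRingEnd ℂ) (F' 1 (Fin.castLE hp'q' j) i) := by
  have hisom : ∀ᶠ θ in 𝓝 0, (F (circleMap 0 1 θ))ᴴ * F (circleMap 0 1 θ) = 1 := by
    have hnear : ∀ᶠ θ in 𝓝 0, circleMap 0 1 θ ∈ W :=
      (continuous_circleMap 0 1).continuousAt.eventually_mem
        (circleMap_zero_one_zero ▸ hWo.mem_nhds h1W)
    exact hnear.mono fun θ hθ => hunit _ ⟨circleMap_mem_sphere 0 zero_le_one θ, hθ⟩
  have hherm := (hasDerivAt_comp_circleMap_zero_one hWo h1W hreg.continuousOn hF' hF'cont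
    ).isHermitian_conjTranspose_mul_of_I_smul hisom
  rw [circleMap_zero_one_zero] at hherm
  intro i j
  rw [← conjTranspose_mul_apply_of_eq_ite hp'q' hF1 (F' 1),
    ← conjTranspose_mul_apply_of_eq_ite hp'q' hF1 (F' 1)]
  exact (hherm.apply i j).symm

/-- Let `F : Δ → M_{p'×q'}(ℂ)` be holomorphic, `C¹` up to the boundary near
`1 ∈ ∂Δ`, with `F(ζ)*F(ζ) = I` on `∂Δ ∩ W` and `F(1) = (I;0)`. Then the top `q'×q'` block of
the boundary derivative `F'(1)` is Hermitian. -/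
theorem stmt6 (p' q' : ℕ) (hq' : 1 ≤ q') (hp'q' : q' ≤ p')
    (F : ℂ → Matrix (Fin p') (Fin q') ℂ)
    (hholo : DifferentiableOn ℂ F (Metric.ball (0 : ℂ) 1))
    (W : Set ℂ) (hWo : IsOpen W) (h1W : (1 : ℂ) ∈ W)
    (hreg : ContDiffOn ℝ 1 F (closure (Metric.ball (0 : ℂ) 1) ∩ W))
    (hunit : ∀ ζ ∈ Metric.sphere (0 : ℂ) 1 ∩ W, (F ζ)ᴴ * F ζ = 1)
    (hF1 : ∀ (k : Fin p') (j : Fin q'), F 1 k j = if (k : ℕ) = (j : ℕ) then 1 else 0)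
    -- `F'` is the complex derivative of `F`, extended continuously to the boundary
    (F' : ℂ → Matrix (Fin p') (Fin q') ℂ)
    (hF' : ∀ z ∈ Metric.ball (0 : ℂ) 1, HasDerivAt F (F' z) z)
    (hF'cont : ContinuousOn F' (closure (Metric.ball (0 : ℂ) 1) ∩ W)) :
    ∀ i j : Fin q', F' 1 (Fin.castLE hp'q' i) j
      = (starRingEnd ℂ) (F' 1 (Fin.castLE hp'q' j) i) :=
  stmt6_general p' q' hp'q' F W hWo h1W hreg hunit hF1 F' hF' hF'cont
end

section
/- Let p ≥ q ≥ 1. The set of extreme points of the compact convex set closure(D_{p,q}) = {Z ∈ M_{p×q}(ℂ) : I_q − Z*Z is positive semidefinite} equals the Shilov boundary S_{p,q,0} = {Z ∈ M_{p×q}(ℂ) : Z*Z = I_q}. -/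
open Matrix
open scoped ComplexOrder

attribute [local instance] Matrix.normedAddCommGroup Matrix.normedSpace

/-!
In the Loewner order of `MatrixOrder` (`A ≤ B` iff `B - A` is positive semidefinite) the set is
`{Z | ZᴴZ ≤ 1}`.

If `ZᴴZ = 1` and `Z = aX + bY` with `a + b = 1`, `a, b > 0` and `XᴴX, YᴴY ≤ 1`, then
`0 = 1 - ZᴴZ = a(1 - XᴴX) + b(1 - YᴴY) + ab(X - Y)ᴴ(X - Y)` is a sum of positive semidefinite
matrices, so `(X - Y)ᴴ(X - Y) = 0` and `X = Y`: `Z` is extreme.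

Conversely, if `A = 1 - ZᴴZ ≠ 0` we exhibit `W ≠ 0` with `Z ± W` still contractions.
If `ZA ≠ 0`, take `W = ZA/2`: then `1 - (Z ± W)ᴴ(Z ± W)` is a cubic polynomial in `A`, and it is a
nonnegative combination of the positive matrices `A, A², A³, (1 - A)A(1 - A), A(1 - A)A`.
If `ZA = 0`, then `ZᴴZ` is an orthogonal projection and `Z` has a nontrivial kernel; since
`q ≤ p`, so does `Zᴴ`. For unit vectors `w ∈ ker Z`, `u ∈ ker Zᴴ` the matrix `W = u wᴴ` gives
`(Z ± W)ᴴ(Z ± W) = ZᴴZ + wwᴴ`, the sum of two orthogonal projections, which is again a projection.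
-/

open Set
open scoped MatrixOrder

theorem notMem_extremePoints_of_add_mem_of_sub_mem {𝕜 E : Type*} [Field 𝕜] [LinearOrder 𝕜]
    [IsStrictOrderedRing 𝕜] [AddCommGroup E] [Module 𝕜 E] {s : Set E} {x v : E} (hv : v ≠ 0)
    (hadd : x + v ∈ s) (hsub : x - v ∈ s) : x ∉ s.extremePoints 𝕜 := by
  intro hx
  have hmid : x ∈ openSegment 𝕜 (x + v) (x - v) :=
    ⟨1 / 2, 1 / 2, by norm_num, by norm_num, by norm_num, by module⟩
  exact hv (add_eq_left.1 ((mem_extremePoints_iff_left.1 hx).2 _ hadd _ hsub hmid))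

namespace Matrix

section Kernel

variable {m n : Type*} [Fintype n]

theorem exists_ne_zero_mulVec_eq_zero_iff_rank_lt {K : Type*} [Field K] (M : Matrix m n K) :
    (∃ v ≠ 0, M *ᵥ v = 0) ↔ M.rank < Fintype.card n := by
  have hnullity := LinearMap.finrank_range_add_finrank_ker M.mulVecLin
  rw [Module.finrank_fintype_fun_eq_card] at hnullity
  rw [rank, ← hnullity, lt_add_iff_pos_right, Module.finrank_pos_iff_exists_ne_zero]
  simp only [ne_eq, Subtype.exists, LinearMap.mem_ker, mulVecLin_apply, Submodule.mk_eq_zero]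
  tauto

theorem exists_star_dotProduct_self_eq_one_mulVec_eq_zero_of_rank_lt {𝕜 : Type*} [RCLike 𝕜]
    (M : Matrix m n 𝕜) (h : M.rank < Fintype.card n) :
    ∃ v, star v ⬝ᵥ v = 1 ∧ M *ᵥ v = 0 := by
  obtain ⟨v, hv, hMv⟩ := (exists_ne_zero_mulVec_eq_zero_iff_rank_lt M).2 h
  obtain ⟨r, hr, hrv⟩ := RCLike.pos_iff_exists_ofReal.1 (dotProduct_star_self_pos_iff.2 hv)
  refine ⟨(√r)⁻¹ • v, ?_, by rw [mulVec_smul, hMv, smul_zero]⟩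
  rw [star_smul, smul_dotProduct, dotProduct_smul, ← hrv, star_trivial, smul_smul,
    RCLike.real_smul_eq_coe_mul, ← RCLike.ofReal_mul, ← mul_inv, Real.mul_self_sqrt hr.le,
    inv_mul_cancel₀ hr.ne', RCLike.ofReal_one]

end Kernel

variable {𝕜 m n : Type*} [RCLike 𝕜] [Fintype m]

theorem conjTranspose_add_mul_self_of_conjTranspose_mul_eq_zero {Z W : Matrix m n 𝕜}
    (h : Zᴴ * W = 0) : (Z + W)ᴴ * (Z + W) = Zᴴ * Z + Wᴴ * W := by
  have h' : Wᴴ * Z = 0 := by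
    rw [← conjTranspose_conjTranspose Z, ← conjTranspose_mul, h, conjTranspose_zero]
  rw [conjTranspose_add, Matrix.add_mul, Matrix.mul_add, Matrix.mul_add, h, h', add_zero,
    zero_add]

theorem isStarProjection_vecMulVec_star [Fintype n] {w : n → 𝕜} (hw : star w ⬝ᵥ w = 1) :
    IsStarProjection (vecMulVec w (star w)) where
  isSelfAdjoint := by
    rw [IsSelfAdjoint, star_eq_conjTranspose, conjTranspose_vecMulVec, star_star]
  isIdempotentElem := by rw [IsIdempotentElem, vecMulVec_mul_vecMulVec, hw, one_smul]

variable [DecidableEq n]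

theorem one_sub_conjTranspose_mul_self_smul_add_smul (X Y : Matrix m n 𝕜) {a b : ℝ}
    (hab : a + b = 1) :
    1 - (a • X + b • Y)ᴴ * (a • X + b • Y) =
      a • (1 - Xᴴ * X) + b • (1 - Yᴴ * Y) + (a * b) • ((X - Y)ᴴ * (X - Y)) := by
  obtain rfl : b = 1 - a := eq_sub_of_add_eq' hab
  simp only [conjTranspose_add, conjTranspose_sub, conjTranspose_smul, star_trivial,
    Matrix.add_mul, Matrix.mul_add, Matrix.sub_mul, Matrix.mul_sub, Matrix.smul_mul,
    Matrix.mul_smul]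
  module

theorem eq_of_conjTranspose_mul_self_smul_add_smul_eq_one [Fintype n] {X Y : Matrix m n 𝕜}
    (hX : Xᴴ * X ≤ 1) (hY : Yᴴ * Y ≤ 1) {a b : ℝ} (ha : 0 < a) (hb : 0 < b) (hab : a + b = 1)
    (h : (a • X + b • Y)ᴴ * (a • X + b • Y) = 1) : X = Y := by
  have hsum := one_sub_conjTranspose_mul_self_smul_add_smul X Y hab
  rw [h, sub_self, eq_comm] at hsum
  have hX' : 0 ≤ a • (1 - Xᴴ * X) := smul_nonneg ha.le (sub_nonneg.2 hX)
  have hY' : 0 ≤ b • (1 - Yᴴ * Y) := smul_nonneg hb.le (sub_nonneg.2 hY)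
  have hXY : 0 ≤ (a * b) • ((X - Y)ᴴ * (X - Y)) :=
    smul_nonneg (mul_pos ha hb).le (posSemidef_conjTranspose_mul_self _).nonneg
  rw [add_eq_zero_iff_of_nonneg (add_nonneg hX' hY') hXY,
    smul_eq_zero_iff_right (mul_pos ha hb).ne', conjTranspose_mul_self_eq_zero,
    sub_eq_zero] at hsum
  exact hsum.2

theorem mem_extremePoints_of_conjTranspose_mul_self_eq_one [Fintype n] {Z : Matrix m n 𝕜}
    (hZ : Zᴴ * Z = 1) : Z ∈ extremePoints ℝ {Z : Matrix m n 𝕜 | Zᴴ * Z ≤ 1} := by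
  refine mem_extremePoints_iff_left.2 ⟨hZ.le, ?_⟩
  rintro X hX Y hY ⟨a, b, ha, hb, hab, rfl⟩
  obtain rfl := eq_of_conjTranspose_mul_self_smul_add_smul_eq_one hX hY ha hb hab hZ
  exact (Convex.combo_self hab X).symm

theorem one_sub_conjTranspose_mul_self_add_smul_mul [Fintype n] {Z : Matrix m n 𝕜}
    {A : Matrix n n 𝕜} (hA : Zᴴ * Z = 1 - A) (c : ℝ) :
    1 - (Z + c • (Z * A))ᴴ * (Z + c • (Z * A)) =
      (1 - 2 * c) • A + (2 * c - c ^ 2) • (A * A) + c ^ 2 • (A * A * A) := by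
  have hAh : Aᴴ = A := by
    rw [eq_sub_iff_add_eq, ← eq_sub_iff_add_eq'] at hA
    rw [hA, conjTranspose_sub, conjTranspose_one, conjTranspose_mul, conjTranspose_conjTranspose]
  have h₁ : Zᴴ * (Z * A) = (1 - A) * A := by rw [← Matrix.mul_assoc, hA]
  have h₂ : (Z * A)ᴴ * Z = A * (1 - A) := by rw [conjTranspose_mul, hAh, Matrix.mul_assoc, hA]
  have h₃ : (Z * A)ᴴ * (Z * A) = A * (1 - A) * A := by
    rw [conjTranspose_mul, hAh, Matrix.mul_assoc, ← Matrix.mul_assoc Zᴴ, hA, Matrix.mul_assoc]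
  simp only [conjTranspose_add, conjTranspose_smul, star_trivial, Matrix.add_mul,
    Matrix.mul_add, Matrix.smul_mul, Matrix.mul_smul, hA, h₁, h₂, h₃,
    Matrix.sub_mul, Matrix.mul_sub, Matrix.one_mul, Matrix.mul_one]
  module

theorem conjTranspose_mul_self_add_smul_mul_one_sub_le_one [Fintype n] {Z : Matrix m n 𝕜}
    (hZ : Zᴴ * Z ≤ 1) {c : ℝ} (hc₀ : -2 ≤ c) (hc₁ : c ≤ 1 / 2) :
    (Z + c • (Z * (1 - Zᴴ * Z)))ᴴ * (Z + c • (Z * (1 - Zᴴ * Z))) ≤ 1 := by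
  set A := 1 - Zᴴ * Z
  set B := Zᴴ * Z
  have hA : 0 ≤ A := sub_nonneg.2 hZ
  have hB : 0 ≤ B := (posSemidef_conjTranspose_mul_self Z).nonneg
  have hBA : B = 1 - A := (sub_sub_cancel 1 B).symm
  rw [← sub_nonneg, one_sub_conjTranspose_mul_self_add_smul_mul hBA c]
  rcases le_total 0 c with hc | hc
  · have hAA : 0 ≤ A * A := (IsSelfAdjoint.of_nonneg hA).mul_self_nonneg
    have hAAA : 0 ≤ A * A * A := by
      simpa only [(IsSelfAdjoint.of_nonneg hA).star_eq] using star_left_conjugate_nonneg hA A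
    have h₁ : 0 ≤ 1 - 2 * c := by linarith
    have h₂ : 0 ≤ 2 * c - c ^ 2 := by nlinarith
    exact add_nonneg (add_nonneg (smul_nonneg h₁ hA) (smul_nonneg h₂ hAA))
      (smul_nonneg (sq_nonneg c) hAAA)
  · -- for `c ≤ 0` the cubic `(1 - 2c)t + (2c - c²)t² + c²t³` is `t - 2ct(1-t)² - (2c + c²)t²(1-t)`
    have hBAB : 0 ≤ B * A * B := by
      simpa only [(IsSelfAdjoint.of_nonneg hB).star_eq] using star_left_conjugate_nonneg hA B
    have hABA : 0 ≤ A * B * A := by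
      simpa only [(IsSelfAdjoint.of_nonneg hA).star_eq] using star_left_conjugate_nonneg hB A
    have hsplit : (1 - 2 * c) • A + (2 * c - c ^ 2) • (A * A) + c ^ 2 • (A * A * A) =
        A + (-2 * c) • (B * A * B) + (-2 * c - c ^ 2) • (A * B * A) := by
      rw [hBA]
      simp only [Matrix.mul_sub, Matrix.sub_mul, Matrix.mul_one, Matrix.one_mul]
      module
    rw [hsplit]
    have h₁ : 0 ≤ -2 * c := by linarith
    have h₂ : 0 ≤ -2 * c - c ^ 2 := by nlinarith
    exact add_nonneg (add_nonneg hA (smul_nonneg h₁ hBAB)) (smul_nonneg h₂ hABA)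

theorem isStarProjection_conjTranspose_mul_self [Fintype n] {Z : Matrix m n 𝕜}
    (hZ : Z * (1 - Zᴴ * Z) = 0) : IsStarProjection (Zᴴ * Z) where
  isSelfAdjoint := isHermitian_conjTranspose_mul_self Z
  isIdempotentElem := by
    rw [Matrix.mul_sub, Matrix.mul_one, sub_eq_zero] at hZ
    rw [IsIdempotentElem, Matrix.mul_assoc, ← hZ]

theorem exists_ne_zero_of_mul_one_sub_conjTranspose_mul_self_eq_zero [Fintype n]
    (hcard : Fintype.card n ≤ Fintype.card m) {Z : Matrix m n 𝕜}
    (hZ : Z * (1 - Zᴴ * Z) = 0) (hne : Zᴴ * Z ≠ 1) :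
    ∃ W ≠ 0, (Z + W)ᴴ * (Z + W) ≤ 1 ∧ (Z - W)ᴴ * (Z - W) ≤ 1 := by
  have hrank : Z.rank < Fintype.card n := by
    obtain ⟨v, hv⟩ : ∃ v, (1 - Zᴴ * Z) *ᵥ v ≠ 0 := by
      by_contra! h
      exact hne (sub_eq_zero.1 (ext_iff_mulVec.2 fun v => by rw [h, zero_mulVec])).symm
    refine (exists_ne_zero_mulVec_eq_zero_iff_rank_lt Z).1 ⟨_, hv, ?_⟩
    rw [mulVec_mulVec, hZ, zero_mulVec]
  obtain ⟨w, hw, hZw⟩ := exists_star_dotProduct_self_eq_one_mulVec_eq_zero_of_rank_lt Z hrank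
  obtain ⟨u, hu, hZu⟩ := exists_star_dotProduct_self_eq_one_mulVec_eq_zero_of_rank_lt Zᴴ
    (by rw [rank_conjTranspose]; exact hrank.trans_le hcard)
  set W := vecMulVec u (star w)
  have hZW : Zᴴ * W = 0 := by rw [mul_vecMulVec, hZu, zero_vecMulVec]
  have hle : Zᴴ * Z + Wᴴ * W ≤ 1 := by
    rw [conjTranspose_vecMulVec, star_star, vecMulVec_mul_vecMulVec, hu, one_smul]
    refine ((isStarProjection_conjTranspose_mul_self hZ).add
      (isStarProjection_vecMulVec_star hw) ?_).le_one
    rw [Matrix.mul_assoc, mul_vecMulVec, hZw, zero_vecMulVec, Matrix.mul_zero]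
  refine ⟨W, fun hW => ?_, ?_, ?_⟩
  · have hWw : W *ᵥ w = u := by rw [vecMulVec_mulVec, hw, MulOpposite.op_one, one_smul]
    rw [hW, zero_mulVec] at hWw
    simp [← hWw] at hu
  · rwa [conjTranspose_add_mul_self_of_conjTranspose_mul_eq_zero hZW]
  · rwa [sub_eq_add_neg, conjTranspose_add_mul_self_of_conjTranspose_mul_eq_zero
      (by rw [Matrix.mul_neg, hZW, neg_zero]), conjTranspose_neg, Matrix.neg_mul,
      Matrix.mul_neg, neg_neg]

theorem exists_ne_zero_of_conjTranspose_mul_self_le_one_of_ne_one [Fintype n]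
    (hcard : Fintype.card n ≤ Fintype.card m) {Z : Matrix m n 𝕜}
    (hZ : Zᴴ * Z ≤ 1) (hne : Zᴴ * Z ≠ 1) :
    ∃ W ≠ 0, (Z + W)ᴴ * (Z + W) ≤ 1 ∧ (Z - W)ᴴ * (Z - W) ≤ 1 := by
  by_cases hdefect : Z * (1 - Zᴴ * Z) = 0
  · exact exists_ne_zero_of_mul_one_sub_conjTranspose_mul_self_eq_zero hcard hdefect hne
  refine ⟨(1 / 2 : ℝ) • (Z * (1 - Zᴴ * Z)), by simpa using hdefect,
    conjTranspose_mul_self_add_smul_mul_one_sub_le_one hZ (by norm_num) (by norm_num), ?_⟩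
  rw [sub_eq_add_neg, ← neg_smul]
  exact conjTranspose_mul_self_add_smul_mul_one_sub_le_one hZ (by norm_num) (by norm_num)

end Matrix

theorem stmt13_general (p q : ℕ) (hqp : q ≤ p) :
    Set.extremePoints ℝ {Z : Matrix (Fin p) (Fin q) ℂ | (1 - Zᴴ * Z).PosSemidef}
      = {Z : Matrix (Fin p) (Fin q) ℂ | Zᴴ * Z = 1} := by
  change extremePoints ℝ {Z : Matrix (Fin p) (Fin q) ℂ | Zᴴ * Z ≤ 1} = _
  ext Z
  refine ⟨fun hZ => ?_, mem_extremePoints_of_conjTranspose_mul_self_eq_one⟩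
  by_contra hne
  have hZ₁ : Z ∈ {Z : Matrix (Fin p) (Fin q) ℂ | Zᴴ * Z ≤ 1} := extremePoints_subset hZ
  obtain ⟨W, hW, hadd, hsub⟩ := exists_ne_zero_of_conjTranspose_mul_self_le_one_of_ne_one
    (by simpa using hqp) hZ₁ hne
  exact notMem_extremePoints_of_add_mem_of_sub_mem hW hadd hsub hZ

/-- The set of extreme points of the compact convex set
`closure(D_{p,q}) = {Z : I - Z*Z positive semidefinite}` is the Shilov boundary
`S_{p,q,0} = {Z : Z*Z = I}`. -/
theorem stmt13 (p q : ℕ) (hq : 1 ≤ q) (hqp : q ≤ p) :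
    Set.extremePoints ℝ {Z : Matrix (Fin p) (Fin q) ℂ | (1 - Zᴴ * Z).PosSemidef}
      = {Z : Matrix (Fin p) (Fin q) ℂ | Zᴴ * Z = 1} :=
  stmt13_general p q hqp
end
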